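/- arXiv:2306.04522 — 3 statements merged into one kernel-verified Lean document; each statement's English description precedes it below -/
import Mathlib

section
/- Let f : [0,∞) → (0,∞) be C¹ and nonincreasing, and let ρ : ℝ → (0,∞) be a C², 2π-periodic function with ∫₀^{2π} f(ρ(θ)) dθ = 2π f(r) for some r > 0. Then ∫₀^{2π} ((ρ² + 2ρ'² - ρρ'')/(ρ² + ρ'²)) f(ρ) dθ ≤ 2π f(r). -/
open Real intervalIntegral

/-!
Write `ψ = arctan (ρ' / ρ)` for the angle between the tangent of the curve and the circle through
the point. A direct computation turns the curvature integrand into `(1 - ψ') · f(ρ)`, so the claim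
becomes `0 ≤ ∫ f(ρ) ψ'`. Integrating by parts over a period, this is `-∫ f'(ρ) ρ' ψ`, which is
nonnegative because `f' ≤ 0` and `ρ'` and `ψ` have the same sign.
-/

theorem Function.Periodic.deriv {f : ℝ → ℝ} {c : ℝ} (h : Function.Periodic f c) :
    Function.Periodic (deriv f) c := fun x => by
  rw [← deriv_comp_add_const, h.funext]

theorem intervalIntegral.integral_mul_deriv_eq_neg_deriv_mul_of_periodic
    {u v u' v' : ℝ → ℝ} {a T : ℝ}
    (hu : ∀ x, HasDerivAt u (u' x) x) (hv : ∀ x, HasDerivAt v (v' x) x)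
    (hu' : IntervalIntegrable u' MeasureTheory.volume a (a + T))
    (hv' : IntervalIntegrable v' MeasureTheory.volume a (a + T))
    (hpu : Function.Periodic u T) (hpv : Function.Periodic v T) :
    ∫ x in a..a + T, u x * v' x = -∫ x in a..a + T, u' x * v x := by
  rw [integral_mul_deriv_eq_deriv_mul (fun x _ => hu x) (fun x _ => hv x) hu' hv', hpu a, hpv a]
  ring

theorem Real.mul_arctan_nonneg (x : ℝ) : 0 ≤ x * arctan x := by
  rcases le_total 0 x with h | h
  · exact mul_nonneg h (arctan_nonneg.2 h)
  · simpa [arctan_neg] using mul_nonneg (neg_nonneg.2 h) (arctan_nonneg.2 (neg_nonneg.2 h))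

theorem Real.mul_arctan_div_nonneg (a : ℝ) {b : ℝ} (hb : 0 < b) : 0 ≤ a * arctan (a / b) := by
  have h := mul_nonneg hb.le (mul_arctan_nonneg (a / b))
  rwa [← mul_assoc, mul_div_cancel₀ a hb.ne'] at h

theorem HasDerivAt.arctan_div {u v : ℝ → ℝ} {u' v' x : ℝ}
    (hu : HasDerivAt u u' x) (hv : HasDerivAt v v' x) (hvx : v x ≠ 0) :
    HasDerivAt (fun t => Real.arctan (u t / v t))
      ((u' * v x - u x * v') / (v x ^ 2 + u x ^ 2)) x := by
  refine (hu.div hv hvx).arctan.congr_deriv ?_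
  simp only [Pi.div_apply]
  field_simp

noncomputable def tangentAngle (ρ : ℝ → ℝ) (θ : ℝ) : ℝ :=
  arctan (deriv ρ θ / ρ θ)

section tangentAngle

variable {ρ : ℝ → ℝ}

theorem hasDerivAt_tangentAngle (hρ : ContDiff ℝ 2 ρ) {θ : ℝ} (hθ : ρ θ ≠ 0) :
    HasDerivAt (tangentAngle ρ)
      ((deriv (deriv ρ) θ * ρ θ - deriv ρ θ * deriv ρ θ) / (ρ θ ^ 2 + deriv ρ θ ^ 2)) θ :=
  HasDerivAt.arctan_div ((hρ.iterate_deriv' 1 1).differentiable one_ne_zero θ).hasDerivAt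
    (hρ.differentiable two_ne_zero θ).hasDerivAt hθ

theorem continuous_deriv_tangentAngle (hρ : ContDiff ℝ 2 ρ) (hρ0 : ∀ θ, ρ θ ≠ 0) :
    Continuous (deriv (tangentAngle ρ)) := by
  have hρ' : ContDiff ℝ 1 (deriv ρ) := hρ.iterate_deriv' 1 1
  have hρ'' : Continuous (deriv (deriv ρ)) := hρ'.continuous_deriv le_rfl
  rw [funext fun θ => (hasDerivAt_tangentAngle hρ (hρ0 θ)).deriv]
  refine Continuous.div (by fun_prop) (by fun_prop) fun θ => ?_
  have := hρ0 θ
  positivity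

theorem curvature_integrand_eq_one_sub_deriv_tangentAngle (hρ : ContDiff ℝ 2 ρ) {θ : ℝ}
    (hθ : ρ θ ≠ 0) :
    (ρ θ ^ 2 + 2 * deriv ρ θ ^ 2 - ρ θ * deriv (deriv ρ) θ) / (ρ θ ^ 2 + deriv ρ θ ^ 2) =
      1 - deriv (tangentAngle ρ) θ := by
  rw [(hasDerivAt_tangentAngle hρ hθ).deriv]
  have : ρ θ ^ 2 + deriv ρ θ ^ 2 ≠ 0 := by positivity
  field_simp
  ring

theorem integral_comp_mul_deriv_tangentAngle_nonneg {w w' : ℝ → ℝ} {T : ℝ} (hT : 0 ≤ T)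
    (hw : ∀ x, 0 < x → HasDerivAt w (w' x) x) (hw'cont : ContinuousOn w' (Set.Ioi 0))
    (hw'_nonpos : ∀ x, 0 < x → w' x ≤ 0)
    (hρ : ContDiff ℝ 2 ρ) (hρpos : ∀ θ, 0 < ρ θ) (hper : Function.Periodic ρ T) :
    0 ≤ ∫ θ in (0:ℝ)..T, w (ρ θ) * deriv (tangentAngle ρ) θ := by
  have hρ1 : Differentiable ℝ ρ := hρ.differentiable two_ne_zero
  have hW : ∀ θ, HasDerivAt (fun θ => w (ρ θ)) (w' (ρ θ) * deriv ρ θ) θ :=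
    fun θ => (hw _ (hρpos θ)).comp θ (hρ1 θ).hasDerivAt
  have hW' : Continuous fun θ => w' (ρ θ) * deriv ρ θ :=
    (hw'cont.comp_continuous hρ.continuous hρpos).mul (hρ.continuous_deriv one_le_two)
  rw [← zero_add T, integral_mul_deriv_eq_neg_deriv_mul_of_periodic hW
    (fun θ => (hasDerivAt_tangentAngle hρ (hρpos θ).ne').differentiableAt.hasDerivAt)
    (hW'.intervalIntegrable _ _)
    ((continuous_deriv_tangentAngle hρ fun θ => (hρpos θ).ne').intervalIntegrable _ _)
    (hper.comp w) ((hper.deriv.div hper).comp arctan), ← integral_neg]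
  refine integral_nonneg_of_forall (by simpa using hT) fun θ => neg_nonneg.2 ?_
  rw [mul_assoc]
  exact mul_nonpos_of_nonpos_of_nonneg (hw'_nonpos _ (hρpos θ))
    (mul_arctan_div_nonneg _ (hρpos θ))

end tangentAngle

theorem weighted_curvature_ineq_general (f ρ : ℝ → ℝ) (r : ℝ)
    (hf : ContDiffOn ℝ 1 f (Set.Ici 0))
    (hfmono : AntitoneOn f (Set.Ici 0))
    (hρ : ContDiff ℝ 2 ρ) (hρpos : ∀ θ, 0 < ρ θ)
    (hper : Function.Periodic ρ (2 * π))
    (hmean : ∫ θ in (0:ℝ)..(2 * π), f (ρ θ) = 2 * π * f r) :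
    ∫ θ in (0:ℝ)..(2 * π),
        ((ρ θ ^ 2 + 2 * (deriv ρ θ) ^ 2 - ρ θ * deriv (deriv ρ) θ)
          / (ρ θ ^ 2 + (deriv ρ θ) ^ 2)) * f (ρ θ)
      ≤ 2 * π * f r := by
  have hf' : ∀ x, 0 < x → HasDerivAt f (deriv f x) x := fun x hx =>
    ((hf.differentiableOn one_ne_zero).differentiableAt (Ici_mem_nhds hx)).hasDerivAt
  have hf'_nonpos : ∀ x, 0 < x → deriv f x ≤ 0 := fun x hx =>
    (derivWithin_of_mem_nhds (Ici_mem_nhds hx)).symm.trans_le hfmono.derivWithin_nonpos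
  have hturn := integral_comp_mul_deriv_tangentAngle_nonneg two_pi_pos.le hf'
    ((hf.mono Set.Ioi_subset_Ici_self).continuousOn_deriv_of_isOpen isOpen_Ioi le_rfl)
    hf'_nonpos hρ hρpos hper
  have hF : Continuous fun θ => f (ρ θ) :=
    hf.continuousOn.comp_continuous hρ.continuous fun θ => (hρpos θ).le
  have hFψ' : Continuous fun θ => f (ρ θ) * deriv (tangentAngle ρ) θ :=
    hF.mul (continuous_deriv_tangentAngle hρ fun θ => (hρpos θ).ne')
  calc _ = ∫ θ in (0:ℝ)..(2 * π), (f (ρ θ) - f (ρ θ) * deriv (tangentAngle ρ) θ) :=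
        integral_congr fun θ _ => by
          rw [curvature_integrand_eq_one_sub_deriv_tangentAngle hρ (hρpos θ).ne']
          ring
    _ = 2 * π * f r - ∫ θ in (0:ℝ)..(2 * π), f (ρ θ) * deriv (tangentAngle ρ) θ := by
        rw [integral_sub (hF.intervalIntegrable _ _) (hFψ'.intervalIntegrable _ _), hmean]
    _ ≤ 2 * π * f r := sub_le_self _ hturn

/-- Two-dimensional weighted curvature inequality in polar coordinates. -/
theorem weighted_curvature_ineq (f ρ : ℝ → ℝ) (r : ℝ) (hr : 0 < r)
    (hf : ContDiffOn ℝ 1 f (Set.Ici 0))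
    (hfpos : ∀ x ∈ Set.Ici (0 : ℝ), 0 < f x)
    (hfmono : AntitoneOn f (Set.Ici 0))
    (hρ : ContDiff ℝ 2 ρ) (hρpos : ∀ θ, 0 < ρ θ)
    (hper : Function.Periodic ρ (2 * π))
    (hmean : ∫ θ in (0:ℝ)..(2 * π), f (ρ θ) = 2 * π * f r) :
    ∫ θ in (0:ℝ)..(2 * π),
        ((ρ θ ^ 2 + 2 * (deriv ρ θ) ^ 2 - ρ θ * deriv (deriv ρ) θ)
          / (ρ θ ^ 2 + (deriv ρ θ) ^ 2)) * f (ρ θ)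
      ≤ 2 * π * f r :=
  weighted_curvature_ineq_general f ρ r hf hfmono hρ hρpos hper hmean
end

section
/- Let E ⊂ ℝ² be a convex body containing the origin with ∂E = {ρ(θ)(cos θ, sin θ)} for a Lipschitz function ρ : [0,2π] → (0,2). Then ‖ρ'‖_{L^∞} ≤ 2√(‖ρ-1‖_{L^∞}) · (1 + ‖ρ-1‖_{L^∞})/(1 - ‖ρ-1‖_{L^∞}), provided ‖ρ-1‖_{L^∞} < 1. -/
open Real Set Filter Topology
open scoped NNReal

/-!
Put `r = 1 - M`, so that `r ≤ ρ` and the disc of radius `r` lies in `E`. For the boundary point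
`P` in direction `α`, the angle `γ α = arccos (r / ρ α)` is the angle between `P` and the points
where the two tangents from `P` touch that disc. Since `E` contains these tangent segments, on
which the radial function is `r / cos (γ α - |β - α|)`, one gets `γ α - |β - α| ≤ γ β`: the
function `γ` is `1`-Lipschitz. As `ρ = r / cos ∘ γ`, the derivative of `ρ` is then bounded by
the derivative `r sin γ / cos² γ = ρ √(ρ² - r²) / r` of `r / cos` at `γ`, and
`ρ √(ρ² - r²) / r ≤ (1 + M) · 2√M / (1 - M)`.
-/

theorem abs_le_of_hasDerivAt_of_eventually_abs_sub_le {f : ℝ → ℝ} {a d C : ℝ} {l : Filter ℝ}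
    [l.NeBot] (hl : l ≤ 𝓝[≠] a) (hf : HasDerivAt f d a)
    (h : ∀ᶠ x in l, |f x - f a| ≤ C * |x - a|) : |d| ≤ C := by
  refine le_of_tendsto (hf.tendsto_slope.mono_left hl).abs ?_
  filter_upwards [h, hl self_mem_nhdsWithin] with x hx hxa
  rwa [slope_def_field, abs_div, div_le_iff₀ (abs_pos.2 (sub_ne_zero.2 hxa))]

theorem abs_le_of_hasDerivAt_of_eqOn_comp {f g h : ℝ → ℝ} {S : Set ℝ} {a d h' : ℝ} {K : ℝ≥0}
    [(𝓝[S \ {a}] a).NeBot] (hf : HasDerivAt f d a) (hh : HasDerivAt h h' (g a))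
    (hg : LipschitzOnWith K g S) (ha : a ∈ S) (hfg : EqOn f (h ∘ g) S) : |d| ≤ K * |h'| := by
  have hl : 𝓝[S \ {a}] a ≤ 𝓝[≠] a := nhdsWithin_mono _ fun x hx => hx.2
  have hga : Tendsto g (𝓝[S \ {a}] a) (𝓝 (g a)) :=
    (hg.continuousOn.continuousWithinAt ha).tendsto.mono_left (nhdsWithin_mono _ sdiff_subset)
  have hK : ∀ ε > 0, |d| ≤ K * (|h'| + ε) := by
    intro ε hε
    refine abs_le_of_hasDerivAt_of_eventually_abs_sub_le hl hf ?_
    filter_upwards [hga.eventually (hasDerivAt_iff_isLittleO.1 hh |>.def hε),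
      self_mem_nhdsWithin] with x hx hxS
    have hgx : |g x - g a| ≤ K * |x - a| := by
      simpa only [Real.dist_eq] using hg.dist_le_mul x hxS.1 a ha
    rw [hfg hxS.1, hfg ha]
    simp only [Function.comp_apply, Real.norm_eq_abs, smul_eq_mul] at hx ⊢
    calc |h (g x) - h (g a)|
        ≤ |h (g x) - h (g a) - (g x - g a) * h'| + |g x - g a| * |h'| := by
          rw [← abs_mul]
          linarith [abs_sub_abs_le_abs_sub (h (g x) - h (g a)) ((g x - g a) * h')]
      _ ≤ (|h'| + ε) * |g x - g a| := by linarith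
      _ ≤ (|h'| + ε) * (K * |x - a|) := by gcongr
      _ = K * (|h'| + ε) * |x - a| := by ring
  refine ge_of_tendsto (x := 𝓝[>] (0:ℝ)) ?_ (eventually_nhdsWithin_of_forall hK)
  simpa using ((tendsto_const_nhds.add tendsto_id).const_mul (K : ℝ)).mono_left
    (nhdsWithin_le_nhds (s := Ioi (0:ℝ)) (a := 0))

theorem nhdsWithin_Icc_sdiff_singleton_neBot {a b x : ℝ} (hab : a < b) (hx : x ∈ Icc a b) :
    (𝓝[Icc a b \ {x}] x).NeBot := by
  rcases hx.2.lt_or_eq with hxb | rfl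
  · exact nhdsGT_neBot x |>.mono <| nhdsWithin_le_of_mem <|
      sdiff_mem (Icc_mem_nhdsGT_of_mem ⟨hx.1, hxb⟩) (mem_of_superset self_mem_nhdsWithin
        fun y hy => ne_of_gt hy)
  · exact nhdsLT_neBot x |>.mono <| nhdsWithin_le_of_mem <|
      sdiff_mem (Icc_mem_nhdsLT_of_mem ⟨hab, le_rfl⟩) (mem_of_superset self_mem_nhdsWithin
        fun y hy => ne_of_lt hy)

noncomputable def polarPoint (t θ : ℝ) : ℝ × ℝ := (t * cos θ, t * sin θ)

theorem polarPoint_mul (a t θ : ℝ) : polarPoint (a * t) θ = a • polarPoint t θ := by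
  simp [polarPoint, mul_assoc]

theorem polarPoint_fst_sq_add_snd_sq (t θ : ℝ) :
    (polarPoint t θ).1 ^ 2 + (polarPoint t θ).2 ^ 2 = t ^ 2 := by
  simp only [polarPoint]
  linear_combination t ^ 2 * cos_sq_add_sin_sq θ

theorem polarPoint_eq_zero_iff {t θ : ℝ} : polarPoint t θ = 0 ↔ t = 0 := by
  refine ⟨fun h => ?_, fun h => by simp [polarPoint, h]⟩
  have := polarPoint_fst_sq_add_snd_sq t θ
  simp only [h, Prod.fst_zero, Prod.snd_zero] at this
  exact pow_eq_zero_iff two_ne_zero |>.1 (by linarith)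

theorem exists_mem_Icc_polarPoint_eq (t φ : ℝ) :
    ∃ θ ∈ Icc 0 (2 * π), polarPoint t θ = polarPoint t φ := by
  refine ⟨toIcoMod two_pi_pos 0 φ,
    Ico_subset_Icc_self (by simpa using toIcoMod_mem_Ico two_pi_pos 0 φ), ?_⟩
  rw [← self_sub_toIcoDiv_zsmul, zsmul_eq_mul]
  simp only [polarPoint, cos_sub_int_mul_two_pi, sin_sub_int_mul_two_pi]

/-- The points of the line tangent at `polarPoint c φ` to the circle of radius `c`. -/
theorem polarPoint_div_cos_add {c φ σ : ℝ} (hσ : cos σ ≠ 0) :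
    polarPoint (c / cos σ) (φ + σ) = polarPoint c φ + tan σ • polarPoint c (φ + π / 2) := by
  simp only [polarPoint, cos_add, sin_add, cos_pi_div_two, sin_pi_div_two, tan_eq_sin_div_cos,
    Prod.smul_mk, Prod.mk_add_mk, smul_eq_mul, Prod.mk.injEq]
  constructor <;> field_simp <;> ring

theorem tan_mem_uIcc {g σ : ℝ} (hg : |g| < π / 2) (hσ : σ ∈ uIcc 0 g) :
    tan σ ∈ uIcc 0 (tan g) := by
  have hsub : uIcc 0 g ⊆ Ioo (-(π / 2)) (π / 2) :=
    (ordConnected_Ioo).uIcc_subset (by simp [pi_pos]) (abs_lt.1 hg)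
  simpa using (strictMonoOn_tan.monotoneOn.mono hsub).mapsTo_uIcc hσ

theorem Convex.add_smul_mem_of_mem_uIcc {V : Type*} [AddCommGroup V] [Module ℝ V] {s : Set V}
    {x v : V} {a b : ℝ} (hs : Convex ℝ s) (hx : x ∈ s) (ha : x + a • v ∈ s)
    (hb : b ∈ uIcc 0 a) : x + b • v ∈ s := by
  have hline : Convex ℝ {t : ℝ | x + t • v ∈ s} := by
    intro t₁ h₁ t₂ h₂ p q hp hq hpq
    show x + (p • t₁ + q • t₂) • v ∈ s
    convert hs h₁ h₂ hp hq hpq using 1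
    linear_combination (norm := module) -(hpq • x)
  exact hline.ordConnected.uIcc_subset (by simpa using hx) ha hb

theorem Convex.polarPoint_div_cos_mem {s : Set (ℝ × ℝ)} {c φ g σ : ℝ} (hs : Convex ℝ s)
    (h₁ : polarPoint c φ ∈ s) (h₂ : polarPoint (c / cos g) (φ + g) ∈ s) (hg : |g| < π / 2)
    (hσ : σ ∈ uIcc 0 g) : polarPoint (c / cos σ) (φ + σ) ∈ s := by
  have hcos : ∀ {x : ℝ}, |x| < π / 2 → cos x ≠ 0 :=
    fun hx => (cos_pos_of_mem_Ioo (abs_lt.1 hx)).ne'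
  have hσg : |σ| < π / 2 := by
    simpa using (abs_sub_left_of_mem_uIcc hσ).trans_lt (by simpa using hg)
  rw [polarPoint_div_cos_add (hcos hg)] at h₂
  rw [polarPoint_div_cos_add (hcos hσg)]
  exact hs.add_smul_mem_of_mem_uIcc h₁ h₂ (tan_mem_uIcc hg hσ)

theorem Convex.smul_notMem_closure_of_mem_frontier {V : Type*} [AddCommGroup V] [Module ℝ V]
    [TopologicalSpace V] [IsTopologicalAddGroup V] [ContinuousSMul ℝ V] {s : Set V} {p : V}
    {t : ℝ} (hs : Convex ℝ s) (h0 : 0 ∈ interior s) (hp : p ∈ frontier s) (ht : 1 < t) :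
    t • p ∉ closure s := by
  intro htp
  have := hs.combo_interior_closure_mem_interior h0 htp (a := 1 - t⁻¹) (b := t⁻¹)
    (sub_pos.2 (inv_lt_one_of_one_lt₀ ht)) (by positivity) (by ring)
  rw [smul_zero, zero_add, smul_smul, inv_mul_cancel₀ (by positivity), one_smul] at this
  exact hp.2 this

theorem le_of_polarPoint_mem_closure {E : Set (ℝ × ℝ)} {t ρ₀ θ : ℝ} (hE : Convex ℝ E)
    (h0 : 0 ∈ interior E) (hρ₀ : 0 < ρ₀) (hfr : polarPoint ρ₀ θ ∈ frontier E)
    (ht : polarPoint t θ ∈ closure E) : t ≤ ρ₀ := by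
  by_contra! h
  refine hE.smul_notMem_closure_of_mem_frontier h0 hfr ((one_lt_div hρ₀).2 h) ?_
  rwa [← polarPoint_mul, div_mul_cancel₀ _ hρ₀.ne']

theorem cos_arccos_div {r t : ℝ} (hr : 0 < r) (h : r ≤ t) : cos (arccos (r / t)) = r / t :=
  cos_arccos (by linarith [div_pos hr (hr.trans_le h)]) (div_le_one_of_le₀ h (hr.le.trans h))

section RadialFunction

variable {E : Set (ℝ × ℝ)} {ρ : ℝ → ℝ} {r : ℝ}

theorem polarPoint_mem_closure_of_le_radial (hE : Convex ℝ E) (h0 : 0 ∈ closure E) (hr : 0 < r)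
    (hfr : ∀ θ ∈ Icc 0 (2 * π), polarPoint (ρ θ) θ ∈ closure E)
    (hrρ : ∀ θ ∈ Icc 0 (2 * π), r ≤ ρ θ) (φ : ℝ) : polarPoint r φ ∈ closure E := by
  obtain ⟨θ, hθ, hθφ⟩ := exists_mem_Icc_polarPoint_eq r φ
  have hρθ : 0 < ρ θ := hr.trans_le (hrρ θ hθ)
  rw [← hθφ, ← div_mul_cancel₀ r hρθ.ne', polarPoint_mul]
  exact hE.closure.smul_mem_of_zero_mem h0 (hfr θ hθ)
    ⟨div_nonneg hr.le hρθ.le, div_le_one_of_le₀ (hrρ θ hθ) hρθ.le⟩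

theorem polarPoint_div_cos_sub_mem_closure (hE : Convex ℝ E) (h0 : 0 ∈ interior E) (hr : 0 < r)
    (hfr : ∀ θ ∈ Icc 0 (2 * π), polarPoint (ρ θ) θ ∈ frontier E)
    (hrρ : ∀ θ ∈ Icc 0 (2 * π), r ≤ ρ θ) {α β : ℝ} (hα : α ∈ Icc 0 (2 * π))
    (hαβ : |β - α| ≤ arccos (r / ρ α)) :
    polarPoint (r / cos (arccos (r / ρ α) - |β - α|)) β ∈ closure E := by
  set g := arccos (r / ρ α)
  have hg : |g| < π / 2 := by
    rw [abs_of_nonneg (arccos_nonneg _)]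
    exact arccos_lt_pi_div_two.2 (div_pos hr (hr.trans_le (hrρ α hα)))
  have hP : polarPoint (r / cos g) α ∈ closure E := by
    rw [cos_arccos_div hr (hrρ α hα), div_div_cancel₀ hr.ne']
    exact frontier_subset_closure (hfr α hα)
  have hT := polarPoint_mem_closure_of_le_radial hE (interior_subset_closure h0) hr
    (fun θ hθ => frontier_subset_closure (hfr θ hθ)) hrρ
  rcases le_total α β with h | h
  · rw [abs_of_nonneg (sub_nonneg.2 h)] at hαβ ⊢
    have := hE.closure.polarPoint_div_cos_mem (hT (α + g)) (g := -g) (σ := β - α - g)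
      (by simpa [cos_neg] using hP) (by rwa [abs_neg])
      (by rw [uIcc_of_ge (by linarith [abs_nonneg g])]; constructor <;> linarith)
    rwa [← cos_neg, neg_sub, show α + g + (β - α - g) = β by ring] at this
  · rw [abs_of_nonpos (sub_nonpos.2 h), neg_sub] at hαβ ⊢
    have := hE.closure.polarPoint_div_cos_mem (hT (α - g)) (g := g) (σ := g - (α - β))
      (by simpa using hP) hg
      (by rw [uIcc_of_le (by linarith [abs_nonneg g])]; constructor <;> linarith)
    rwa [show α - g + (g - (α - β)) = β by ring] at this

theorem arccos_div_sub_abs_le_arccos_div (hE : Convex ℝ E) (h0 : 0 ∈ interior E) (hr : 0 < r)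
    (hfr : ∀ θ ∈ Icc 0 (2 * π), polarPoint (ρ θ) θ ∈ frontier E)
    (hrρ : ∀ θ ∈ Icc 0 (2 * π), r ≤ ρ θ) {α β : ℝ} (hα : α ∈ Icc 0 (2 * π))
    (hβ : β ∈ Icc 0 (2 * π)) : arccos (r / ρ α) - |β - α| ≤ arccos (r / ρ β) := by
  set g := arccos (r / ρ α)
  rcases le_or_gt |β - α| g with h | h
  · have hρβ : 0 < ρ β := hr.trans_le (hrρ β hβ)
    have hg : g < π / 2 := arccos_lt_pi_div_two.2 (div_pos hr (hr.trans_le (hrρ α hα)))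
    have hcos : 0 < cos (g - |β - α|) :=
      cos_pos_of_mem_Ioo ⟨by linarith [pi_pos], by linarith [abs_nonneg (β - α)]⟩
    have hle := le_of_polarPoint_mem_closure hE h0 hρβ (hfr β hβ)
      (polarPoint_div_cos_sub_mem_closure hE h0 hr hfr hrρ hα h)
    rw [div_le_iff₀ hcos, ← div_le_iff₀' hρβ] at hle
    calc g - |β - α| = arccos (cos (g - |β - α|)) :=
          (arccos_cos (by linarith) (by linarith [pi_pos, abs_nonneg (β - α)])).symm
      _ ≤ arccos (r / ρ β) := arccos_le_arccos hle
  · linarith [arccos_nonneg (r / ρ β)]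

theorem lipschitzOnWith_arccos_div_radial (hE : Convex ℝ E) (h0 : 0 ∈ interior E) (hr : 0 < r)
    (hfr : ∀ θ ∈ Icc 0 (2 * π), polarPoint (ρ θ) θ ∈ frontier E)
    (hrρ : ∀ θ ∈ Icc 0 (2 * π), r ≤ ρ θ) :
    LipschitzOnWith 1 (fun θ => arccos (r / ρ θ)) (Icc 0 (2 * π)) := by
  refine LipschitzOnWith.of_dist_le_mul fun α hα β hβ => ?_
  rw [Real.dist_eq, Real.dist_eq, NNReal.coe_one, one_mul]
  have hαβ := arccos_div_sub_abs_le_arccos_div hE h0 hr hfr hrρ hα hβ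
  have hβα := arccos_div_sub_abs_le_arccos_div hE h0 hr hfr hrρ hβ hα
  exact abs_sub_le_iff.2 ⟨by linarith [abs_sub_comm α β], by linarith [abs_sub_comm α β]⟩

end RadialFunction

theorem IsCompact.bddAbove_abs_sub_radial {E : Set (ℝ × ℝ)} {S : Set ℝ} {ρ : ℝ → ℝ}
    (hE : IsCompact E) (hρ : ∀ θ ∈ S, polarPoint (ρ θ) θ ∈ E) (c : ℝ) :
    BddAbove ((fun θ => |ρ θ - c|) '' S) := by
  obtain ⟨R, hR⟩ := hE.bddAbove_image (f := fun p => p.1 ^ 2 + p.2 ^ 2) (by fun_prop)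
  refine ⟨R + 1 + |c|, ?_⟩
  rintro _ ⟨θ, hθ, rfl⟩
  have hρR : ρ θ ^ 2 ≤ R := by
    simpa only [polarPoint_fst_sq_add_snd_sq] using hR (mem_image_of_mem _ (hρ θ hθ))
  have : |ρ θ| ≤ ρ θ ^ 2 + 1 := by nlinarith [abs_nonneg (ρ θ), sq_abs (ρ θ)]
  linarith [abs_sub (ρ θ) c]

theorem hasDerivAt_div_cos {c γ : ℝ} (hγ : cos γ ≠ 0) :
    HasDerivAt (fun y => c / cos y) (c * sin γ / cos γ ^ 2) γ :=
  ((hasDerivAt_const γ c).div (hasDerivAt_cos γ) hγ).congr_deriv (by ring)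

theorem mul_sin_arccos_div_le {M t : ℝ} (hM : M < 1) (ht : |t - 1| ≤ M) :
    (1 - M) * sin (arccos ((1 - M) / t)) / cos (arccos ((1 - M) / t)) ^ 2 ≤
      2 * √M * ((1 + M) / (1 - M)) := by
  obtain ⟨htl, htu⟩ := abs_le.1 ht
  have hr : 0 < 1 - M := by linarith
  have ht0 : 0 < t := by linarith
  have hsin : sin (arccos ((1 - M) / t)) = √(t ^ 2 - (1 - M) ^ 2) / t := by
    rw [sin_arccos, show 1 - ((1 - M) / t) ^ 2 = (t ^ 2 - (1 - M) ^ 2) / t ^ 2 by field_simp,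
      sqrt_div' _ (sq_nonneg t), sqrt_sq ht0.le]
  have hsqrt : √(t ^ 2 - (1 - M) ^ 2) ≤ 2 * √M := by
    rw [sqrt_le_iff, mul_pow, sq_sqrt (by linarith)]
    exact ⟨by positivity, by nlinarith⟩
  rw [hsin, cos_arccos_div hr (by linarith)]
  calc (1 - M) * (√(t ^ 2 - (1 - M) ^ 2) / t) / ((1 - M) / t) ^ 2
      = t * √(t ^ 2 - (1 - M) ^ 2) / (1 - M) := by field_simp
    _ ≤ (1 + M) * (2 * √M) / (1 - M) := by gcongr <;> linarith
    _ = 2 * √M * ((1 + M) / (1 - M)) := by ring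

theorem radial_deriv_bound_of_convex_general (E : Set (ℝ × ℝ)) (ρ : ℝ → ℝ)
    (hEc : IsCompact E) (hEconv : Convex ℝ E)
    (h0 : (0, 0) ∈ E)
    (hbd : frontier E = (fun θ => (ρ θ * Real.cos θ, ρ θ * Real.sin θ)) '' Set.Icc 0 (2 * π))
    (M : ℝ) (hM : M = sSup ((fun θ => |ρ θ - 1|) '' Set.Icc 0 (2 * π))) (hM1 : M < 1) :
    ∀ θ ∈ Set.Icc (0:ℝ) (2 * π), ∀ d : ℝ, HasDerivAt ρ d θ →
      |d| ≤ 2 * Real.sqrt M * ((1 + M) / (1 - M)) := by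
  intro θ₀ hθ₀ d hd
  have hfr : ∀ θ ∈ Icc 0 (2 * π), polarPoint (ρ θ) θ ∈ frontier E :=
    fun θ hθ => hbd ▸ mem_image_of_mem _ hθ
  have hρM : ∀ θ ∈ Icc 0 (2 * π), |ρ θ - 1| ≤ M := fun θ hθ =>
    hM ▸ le_csSup (hEc.bddAbove_abs_sub_radial
      (fun θ hθ => hEc.isClosed.frontier_subset (hfr θ hθ)) 1) (mem_image_of_mem _ hθ)
  have hr : 0 < 1 - M := by linarith
  have hrρ : ∀ θ ∈ Icc 0 (2 * π), 1 - M ≤ ρ θ := fun θ hθ => by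
    linarith [(abs_le.1 (hρM θ hθ)).1]
  have h0int : (0 : ℝ × ℝ) ∈ interior E := by
    refine (mem_interior_iff_notMem_frontier h0).2 ?_
    rintro h0fr
    obtain ⟨θ, hθ, hθ0⟩ := hbd ▸ h0fr
    linarith [hrρ θ hθ, polarPoint_eq_zero_iff.1 hθ0]
  have : (𝓝[Icc 0 (2 * π) \ {θ₀}] θ₀).NeBot :=
    nhdsWithin_Icc_sdiff_singleton_neBot two_pi_pos hθ₀
  have hρ_eq : EqOn ρ ((fun y => (1 - M) / cos y) ∘ fun θ => arccos ((1 - M) / ρ θ))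
      (Icc 0 (2 * π)) := fun θ hθ => by
    simp only [Function.comp_apply, cos_arccos_div hr (hrρ θ hθ)]
    field_simp
  have hcos : cos (arccos ((1 - M) / ρ θ₀)) ≠ 0 := by
    rw [cos_arccos_div hr (hrρ θ₀ hθ₀)]
    exact (div_pos hr (hr.trans_le (hrρ θ₀ hθ₀))).ne'
  have hd_le := abs_le_of_hasDerivAt_of_eqOn_comp hd (hasDerivAt_div_cos hcos)
    (lipschitzOnWith_arccos_div_radial hEconv h0int hr hfr hrρ) hθ₀ hρ_eq
  rw [NNReal.coe_one, one_mul, abs_of_nonneg (div_nonneg (mul_nonneg hr.le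
    (sin_nonneg_of_nonneg_of_le_pi (arccos_nonneg _) (arccos_le_pi _))) (sq_nonneg _))] at hd_le
  exact hd_le.trans (mul_sin_arccos_div_le hM1 (hρM θ₀ hθ₀))

/-- Gradient bound for the radial function of a planar convex body close to the unit disk. -/
theorem radial_deriv_bound_of_convex (E : Set (ℝ × ℝ)) (ρ : ℝ → ℝ) (K : NNReal)
    (hEc : IsCompact E) (hEconv : Convex ℝ E) (hEint : (interior E).Nonempty)
    (h0 : (0, 0) ∈ E)
    (hρrange : ∀ θ ∈ Set.Icc (0:ℝ) (2 * π), ρ θ ∈ Set.Ioo (0:ℝ) 2)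
    (hlip : LipschitzOnWith K ρ (Set.Icc 0 (2 * π)))
    (hbd : frontier E = (fun θ => (ρ θ * Real.cos θ, ρ θ * Real.sin θ)) '' Set.Icc 0 (2 * π))
    (M : ℝ) (hM : M = sSup ((fun θ => |ρ θ - 1|) '' Set.Icc 0 (2 * π))) (hM1 : M < 1) :
    ∀ θ ∈ Set.Icc (0:ℝ) (2 * π), ∀ d : ℝ, HasDerivAt ρ d θ →
      |d| ≤ 2 * Real.sqrt M * ((1 + M) / (1 - M)) :=
  radial_deriv_bound_of_convex_general E ρ hEc hEconv h0 hbd M hM hM1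
end

section
/- Let h : ℝⁿ\{0} → (0,∞) be positively homogeneous of degree 0 and C¹. Then for every x ∈ Sⁿ⁻¹, ⟨x, ∇h(x)⟩ = 0, and the outward unit normal to the set E = {t·x·h(x) : x ∈ Sⁿ⁻¹, t ∈ (0,1)} at the boundary point x·h(x) equals (x·h(x) - ∇h(x))/√(h(x)² + |∇h(x)|²). -/
open Real
open scoped RealInnerProductSpace

/-!
Differentiating `t ↦ h (t • x) = h x` at `t = 1` gives `⟪∇h(x), x⟫ = 0`. Hence, with
`w = h(x) x - ∇h(x)`, Pythagoras gives `‖w‖ = √(h(x)² + ‖∇h(x)‖²)`, so `ν = w / ‖w‖`, and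
`⟪h(x) x, w⟫ = h(x)² > 0`. The differential of `Φ(y) = h(y) y` is
`v ↦ ⟪∇h(x), v⟫ x + h(x) v`, which for `v ⊥ x` is orthogonal to `w`.
-/

section Homogeneous

variable {E F : Type*} [NormedAddCommGroup E] [NormedSpace ℝ E]
  [NormedAddCommGroup F] [NormedSpace ℝ F]

theorem fderiv_apply_self_eq_zero_of_smul_invariant {f : E → F} {x : E}
    (hf : DifferentiableAt ℝ f x) (hinv : ∀ c : ℝ, 0 < c → f (c • x) = f x) :
    fderiv ℝ f x x = 0 := by
  have hline : HasDerivAt (fun t : ℝ => f (t • x)) (fderiv ℝ f x x) 1 := by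
    have hray : HasDerivAt (fun t : ℝ => t • x) x 1 := by
      simpa using (hasDerivAt_id (1 : ℝ)).smul_const x
    exact hf.hasFDerivAt.comp_hasDerivAt_of_eq 1 hray (one_smul ℝ x).symm
  have hconst : (fun t : ℝ => f (t • x)) =ᶠ[nhds 1] fun _ => f x := by
    filter_upwards [lt_mem_nhds one_pos] with t ht using hinv t ht
  exact hline.unique ((hasDerivAt_const 1 (f x)).congr_of_eventuallyEq hconst)

theorem fderiv_smul_self_apply {f : E → ℝ} {x : E} (hf : DifferentiableAt ℝ f x) (v : E) :
    fderiv ℝ (fun y => f y • y) x v = fderiv ℝ f x v • x + f x • v := by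
  rw [fderiv_fun_smul hf differentiableAt_fun_id]
  simp [add_comm]

end Homogeneous

section InnerProduct

variable {E : Type*} [NormedAddCommGroup E] [InnerProductSpace ℝ E] {x g : E}

theorem norm_smul_sub_eq_sqrt (hx : ‖x‖ = 1) (hxg : ⟪x, g⟫ = 0) (a : ℝ) :
    ‖a • x - g‖ = √(a ^ 2 + ‖g‖ ^ 2) := by
  rw [← Real.sqrt_sq (norm_nonneg _), norm_sub_sq_real, real_inner_smul_left, hxg, norm_smul, hx,
    Real.norm_eq_abs, mul_one, sq_abs, mul_zero, mul_zero, sub_zero]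

theorem inner_smul_smul_sub_eq_sq (hx : ‖x‖ = 1) (hxg : ⟪x, g⟫ = 0) (a : ℝ) :
    ⟪a • x, a • x - g⟫ = a ^ 2 := by
  rw [inner_sub_right, real_inner_smul_left, real_inner_smul_left, real_inner_smul_right,
    real_inner_self_eq_norm_sq, hx, hxg]
  ring

theorem inner_smul_add_smul_smul_sub_eq_zero (hx : ‖x‖ = 1) (hxg : ⟪x, g⟫ = 0) (a : ℝ) {v : E}
    (hv : ⟪v, x⟫ = 0) : ⟪⟪g, v⟫ • x + a • v, a • x - g⟫ = 0 := by
  simp only [inner_add_left, inner_sub_right, real_inner_smul_left, real_inner_smul_right,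
    real_inner_self_eq_norm_sq, hx, hxg, hv, real_inner_comm g v]
  ring

end InnerProduct

theorem outward_normal_starshaped_general (n : ℕ)
    (h : EuclideanSpace ℝ (Fin n) → ℝ)
    (hpos : ∀ x, x ≠ 0 → 0 < h x)
    (hhom : ∀ (c : ℝ), 0 < c → ∀ x, x ≠ 0 → h (c • x) = h x)
    (hC1 : ContDiffOn ℝ 1 h {(0 : EuclideanSpace ℝ (Fin n))}ᶜ) :
    ∀ x : EuclideanSpace ℝ (Fin n), ‖x‖ = 1 →
      ⟪x, gradient h x⟫ = 0 ∧
      (let ν : EuclideanSpace ℝ (Fin n) :=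
          (Real.sqrt ((h x) ^ 2 + ‖gradient h x‖ ^ 2))⁻¹ • (h x • x - gradient h x);
        ‖ν‖ = 1 ∧ 0 < ⟪h x • x, ν⟫ ∧
          ∀ v : EuclideanSpace ℝ (Fin n), ⟪v, x⟫ = 0 →
            ⟪fderiv ℝ (fun y => h y • y) x v, ν⟫ = 0) := by
  intro x hx
  have hx0 : x ≠ 0 := ne_zero_of_norm_ne_zero (hx.trans_ne one_ne_zero)
  have hd : DifferentiableAt ℝ h x :=
    (hC1.differentiableOn one_ne_zero).differentiableAt (isOpen_compl_singleton.mem_nhds hx0)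
  set g := gradient h x
  have hxg : ⟪x, g⟫ = 0 := by
    rw [real_inner_comm, inner_gradient_left]
    exact fderiv_apply_self_eq_zero_of_smul_invariant hd fun c hc => hhom c hc x hx0
  have hdΦ (v) : fderiv ℝ (fun y => h y • y) x v = ⟪g, v⟫ • x + h x • v := by
    rw [fderiv_smul_self_apply hd, inner_gradient_left]
  have hhx : 0 < h x := hpos x hx0
  have hw : h x • x - g ≠ 0 := by
    rw [← norm_pos_iff, norm_smul_sub_eq_sqrt hx hxg]
    exact Real.sqrt_pos.2 (add_pos_of_pos_of_nonneg (pow_pos hhx 2) (sq_nonneg _))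
  rw [← norm_smul_sub_eq_sqrt hx hxg]
  refine ⟨hxg, norm_smul_inv_norm hw, ?_, fun v hv => ?_⟩
  · rw [real_inner_smul_right, inner_smul_smul_sub_eq_sq hx hxg]
    exact mul_pos (inv_pos.2 (norm_pos_iff.2 hw)) (pow_pos hhx 2)
  · rw [hdΦ, real_inner_smul_right, inner_smul_add_smul_smul_sub_eq_zero hx hxg _ hv, mul_zero]

/-- For a `C¹`, positively 0-homogeneous radial function `h`, the gradient is tangent to
the sphere, and the vector `(h(x)x - ∇h(x))/√(h² + |∇h|²)` is the outward unit normal to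
the star-shaped set with radial function `h` at the boundary point `h(x)x`: it has unit
norm, annihilates the tangent space of the boundary (the image under the differential of
`Φ(x) = h(x)x` of the tangent space of the sphere), and points outward. -/
theorem outward_normal_starshaped (n : ℕ) (hn : 2 ≤ n)
    (h : EuclideanSpace ℝ (Fin n) → ℝ)
    (hpos : ∀ x, x ≠ 0 → 0 < h x)
    (hhom : ∀ (c : ℝ), 0 < c → ∀ x, x ≠ 0 → h (c • x) = h x)
    (hC1 : ContDiffOn ℝ 1 h {(0 : EuclideanSpace ℝ (Fin n))}ᶜ) :
    ∀ x : EuclideanSpace ℝ (Fin n), ‖x‖ = 1 →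
      ⟪x, gradient h x⟫ = 0 ∧
      (let ν : EuclideanSpace ℝ (Fin n) :=
          (Real.sqrt ((h x) ^ 2 + ‖gradient h x‖ ^ 2))⁻¹ • (h x • x - gradient h x);
        ‖ν‖ = 1 ∧ 0 < ⟪h x • x, ν⟫ ∧
          ∀ v : EuclideanSpace ℝ (Fin n), ⟪v, x⟫ = 0 →
            ⟪fderiv ℝ (fun y => h y • y) x v, ν⟫ = 0) :=
  outward_normal_starshaped_general n h hpos hhom hC1
end
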